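/- Let 0 < λ < 1 < μ. Then the point p* = (x*, y*) is a fixed point of Φ_{λ,μ}, and it lies in the interior of the triangle T, i.e., 0 < y* < x* < 1. -/

import Mathlib

/-!
`x*` is the positive root of `q(x) = (1 - λ) x² + (1 + λ - 1/μ) x - 1`, and the fixed-point
equations of `Φ_{λ,μ}` on the line `y = x - 1/μ` reduce exactly to `q(x) = 0`. Since `q(0) < 0`,
the sign of `q` on `x > 0` is the sign of `x - x*`; from `q(1/μ) = (1/μ - 1)(1 - λ/μ) < 0` and
`q(1) = 1 - 1/μ > 0` we get `1/μ < x* < 1`, i.e. `0 < y* < x* < 1`.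
-/

noncomputable section

/-- The planar R-S flip-flop model map `Φ_{λ,μ}(x,y) = (1 − x(λ(1−x) + y), μy(x − y))`. -/
def Phi (l m : ℝ) (p : ℝ × ℝ) : ℝ × ℝ :=
  (1 - p.1 * (l * (1 - p.1) + p.2), m * p.2 * (p.1 - p.2))

/-- `x*` coordinate of the interior fixed point. -/
def xstar (l m : ℝ) : ℝ :=
  ((m⁻¹ - l - 1) + Real.sqrt ((1 + l - m⁻¹) ^ 2 + 4 * (1 - l))) / (2 * (1 - l))

/-- `y*` coordinate of the interior fixed point. -/
def ystar (l m : ℝ) : ℝ := xstar l m - 1 / m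

section QuadraticRoot

variable {a b c : ℝ}

/-- The larger root of `a x² + b x + c` when `a > 0`. -/
def quadRoot (a b c : ℝ) : ℝ := (-b + √(discrim a b c)) / (2 * a)

theorem discrim_pos_of_mul_neg (h : a * c < 0) : 0 < discrim a b c := by
  rw [discrim]
  nlinarith [sq_nonneg b]

theorem quadRoot_isRoot (ha : a ≠ 0) (hd : 0 ≤ discrim a b c) :
    a * (quadRoot a b c * quadRoot a b c) + b * quadRoot a b c + c = 0 :=
  (quadratic_eq_zero_iff ha (Real.mul_self_sqrt hd).symm _).mpr (Or.inl rfl)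

theorem quadratic_eq_mul_sub_roots (ha : a ≠ 0) {s : ℝ} (hs : discrim a b c = s * s) (x : ℝ) :
    a * (x * x) + b * x + c = a * (x - (-b - s) / (2 * a)) * (x - (-b + s) / (2 * a)) := by
  rw [discrim] at hs
  field_simp
  linear_combination -hs

theorem smallerRoot_neg (ha : 0 < a) (hc : c < 0) : (-b - √(discrim a b c)) / (2 * a) < 0 := by
  have hb : -b < √(discrim a b c) := by
    calc -b ≤ |b| := neg_le_abs b
      _ = √(b ^ 2) := (Real.sqrt_sq_eq_abs b).symm
      _ < √(discrim a b c) := by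
        rw [discrim]; gcongr; nlinarith [mul_neg_of_pos_of_neg ha hc]
  exact div_neg_of_neg_of_pos (by linarith) (by positivity)

theorem quadratic_eq_pos_mul_sub_quadRoot (ha : 0 < a) (hc : c < 0) {x : ℝ} (hx : 0 < x) :
    ∃ k > 0, a * (x * x) + b * x + c = k * (x - quadRoot a b c) := by
  have hd := (discrim_pos_of_mul_neg (b := b) (mul_neg_of_pos_of_neg ha hc)).le
  refine ⟨a * (x - (-b - √(discrim a b c)) / (2 * a)), ?_, ?_⟩
  · have := smallerRoot_neg (b := b) ha hc
    exact mul_pos ha (by linarith)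
  · exact quadratic_eq_mul_sub_roots ha.ne' (Real.mul_self_sqrt hd).symm x

theorem quadRoot_lt_iff (ha : 0 < a) (hc : c < 0) {x : ℝ} (hx : 0 < x) :
    quadRoot a b c < x ↔ 0 < a * (x * x) + b * x + c := by
  obtain ⟨k, hk, hq⟩ := quadratic_eq_pos_mul_sub_quadRoot (b := b) ha hc hx
  rw [hq, mul_pos_iff_of_pos_left hk, sub_pos]

theorem lt_quadRoot_iff (ha : 0 < a) (hc : c < 0) {x : ℝ} (hx : 0 < x) :
    x < quadRoot a b c ↔ a * (x * x) + b * x + c < 0 := by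
  obtain ⟨k, hk, hq⟩ := quadratic_eq_pos_mul_sub_quadRoot (b := b) ha hc hx
  rw [hq, ← neg_pos, ← mul_neg, mul_pos_iff_of_pos_left hk, neg_pos, sub_neg]

end QuadraticRoot

theorem xstar_eq_quadRoot (l m : ℝ) : xstar l m = quadRoot (1 - l) (1 + l - m⁻¹) (-1) := by
  rw [xstar, quadRoot, discrim]
  ring_nf

theorem isFixedPt_Phi_of_quadratic {l m x : ℝ} (hm : m ≠ 0)
    (hx : (1 - l) * (x * x) + (1 + l - m⁻¹) * x + -1 = 0) :
    Function.IsFixedPt (Phi l m) (x, x - 1 / m) := by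
  ext
  · simp only [Phi]
    linear_combination -hx
  · simp only [Phi]
    field_simp
    ring

theorem stmt_12_general (l m : ℝ) (hl1 : l < 1) (hm : 1 < m) :
    Phi l m (xstar l m, ystar l m) = (xstar l m, ystar l m) ∧
    0 < ystar l m ∧ ystar l m < xstar l m ∧ xstar l m < 1 := by
  have ha : 0 < 1 - l := by linarith
  have hc : (-1 : ℝ) < 0 := by norm_num
  have hinv0 : 0 < m⁻¹ := by positivity
  have hinv1 : m⁻¹ < 1 := inv_lt_one_of_one_lt₀ hm
  have hlower : m⁻¹ < xstar l m := by
    rw [xstar_eq_quadRoot, lt_quadRoot_iff ha hc hinv0]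
    calc (1 - l) * (m⁻¹ * m⁻¹) + (1 + l - m⁻¹) * m⁻¹ + -1 = (m⁻¹ - 1) * (1 - l * m⁻¹) := by ring
      _ < 0 := mul_neg_of_neg_of_pos (by linarith) (by nlinarith [mul_pos ha hinv0])
  have hupper : xstar l m < 1 := by
    rw [xstar_eq_quadRoot, quadRoot_lt_iff ha hc one_pos]
    linarith
  have hfixed : Function.IsFixedPt (Phi l m) (xstar l m, ystar l m) := by
    rw [ystar, xstar_eq_quadRoot]
    exact isFixedPt_Phi_of_quadratic (by positivity)
      (quadRoot_isRoot ha.ne' (discrim_pos_of_mul_neg (mul_neg_of_pos_of_neg ha hc)).le)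
  have hy : ystar l m = xstar l m - m⁻¹ := by rw [ystar, one_div]
  refine ⟨hfixed, ?_, ?_, hupper⟩ <;> rw [hy] <;> linarith

/-- For 0 < λ < 1 < μ, p* = (x*, y*) is a fixed point of Φ_{λ,μ} lying in the interior
of the triangle T, i.e. 0 < y* < x* < 1. -/
theorem stmt_12 (l m : ℝ) (hl0 : 0 < l) (hl1 : l < 1) (hm : 1 < m) :
    Phi l m (xstar l m, ystar l m) = (xstar l m, ystar l m) ∧
    0 < ystar l m ∧ ystar l m < xstar l m ∧ xstar l m < 1 :=
  stmt_12_general l m hl1 hm
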